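/- If P ≠ ∅, then the intersection Q^∞ of the sets Qᵏ over all k ∈ ℕ is nonempty, its infimum belongs to P, and inf Q^∞ = inf P. -/

import Mathlib

open Classical in
/-- The decreasing sequence of sets `Qᵏ`: `Q⁰ = [0,1]` and
`Q^{k+1} = {q ∈ Qᵏ : (1−δ)·u*(q) + δ·Uᵏ(q) ≥ m(q)}`, where `Uᵏ` is the chord of `m`
from `(inf Qᵏ, m(inf Qᵏ))` to `(1, m(1))` (constant `m(1)` if `inf Qᵏ = 1`). -/
noncomputable def Qseq (m ustar : ℝ → ℝ) (δ : ℝ) : ℕ → Set ℝ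
  | 0 => Set.Icc 0 1
  | k + 1 =>
      if Qseq m ustar δ k = ∅ then (∅ : Set ℝ)
      else
        {q ∈ Qseq m ustar δ k |
          (1 - δ) * ustar q +
            δ * (if sInf (Qseq m ustar δ k) < 1 then
                ((1 - q) * m (sInf (Qseq m ustar δ k))
                  + (q - sInf (Qseq m ustar δ k)) * m 1) / (1 - sInf (Qseq m ustar δ k))
              else m 1)
          ≥ m q}

/-!
Every contact point `p ∈ P` survives each step, because `u*` lies below `m` and hence below
every chord `Uᵏ`; so `P ⊆ Q^∞`. Each `Qᵏ` is closed, so `q = inf Q^∞ ∈ Q^∞` and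
`inf Qᵏ → q`. The chords `Uᵏ(q)` then tend to `m(q)`, and the defining inequality passes to
the limit as `m(q) ≤ (1−δ)·u*(q) + δ·m(q)`, i.e. `m(q) ≤ u*(q)`: thus `q ∈ P`, and `q ≤ inf P`
since `P ⊆ Q^∞`.
-/

open Set Filter Topology

theorem tendsto_csInf_iInter_of_antitone {S : ℕ → Set ℝ} (hS : Antitone S)
    (hclosed : ∀ k, IsClosed (S k)) (hbdd : BddBelow (S 0)) (hne : (⋂ k, S k).Nonempty) :
    Tendsto (fun k => sInf (S k)) atTop (𝓝 (sInf (⋂ k, S k))) := by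
  have hbddk : ∀ k, BddBelow (S k) := fun k => hbdd.mono (hS (Nat.zero_le k))
  have hnek : ∀ k, (S k).Nonempty := fun k => hne.mono (iInter_subset S k)
  have hle : ∀ k, sInf (S k) ≤ sInf (⋂ k, S k) :=
    fun k => csInf_le_csInf (hbddk k) hne (iInter_subset S k)
  have hmono : Monotone fun k => sInf (S k) :=
    fun j k hjk => csInf_le_csInf (hbddk j) (hnek k) (hS hjk)
  have hlim := tendsto_atTop_ciSup hmono ⟨_, forall_mem_range.2 hle⟩
  have hsup_mem : (⨆ k, sInf (S k)) ∈ ⋂ k, S k := by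
    refine mem_iInter.2 fun j => (hclosed j).mem_of_tendsto hlim ?_
    exact eventually_atTop.2 ⟨j, fun k hk =>
      hS hk ((hclosed k).csInf_mem (hnek k) (hbddk k))⟩
  have hsup : (⨆ k, sInf (S k)) = sInf (⋂ k, S k) :=
    le_antisymm (ciSup_le hle) (csInf_le (hbdd.mono (iInter_subset S 0)) hsup_mem)
  rwa [hsup] at hlim

theorem apply_eq_of_affine {u : ℝ → ℝ}
    (haff : ∀ x y t : ℝ, u ((1 - t) * x + t * y) = (1 - t) * u x + t * u y) (q : ℝ) :
    u q = (1 - q) * u 0 + q * u 1 := by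
  simpa using haff 0 1 q

theorem continuous_of_affine {u : ℝ → ℝ}
    (haff : ∀ x y t : ℝ, u ((1 - t) * x + t * y) = (1 - t) * u x + t * u y) : Continuous u := by
  rw [funext (apply_eq_of_affine haff)]
  fun_prop

/-- The chord `Uᵏ` of the paper is `chordToOne m (inf Qᵏ)`. -/
noncomputable def chordToOne (m : ℝ → ℝ) (a q : ℝ) : ℝ :=
  if a < 1 then ((1 - q) * m a + (q - a) * m 1) / (1 - a) else m 1

theorem continuous_chordToOne (m : ℝ → ℝ) (a : ℝ) : Continuous (chordToOne m a) := by
  unfold chordToOne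
  split_ifs <;> fun_prop

theorem chordToOne_one (m : ℝ → ℝ) (a : ℝ) : chordToOne m a 1 = m 1 := by
  unfold chordToOne
  split_ifs with ha
  · field_simp [(sub_pos.2 ha).ne']
    ring
  · rfl

theorem affine_le_chordToOne {m u : ℝ → ℝ}
    (haff : ∀ x y t : ℝ, u ((1 - t) * x + t * y) = (1 - t) * u x + t * u y)
    {a q : ℝ} (ha : u a ≤ m a) (h1 : u 1 ≤ m 1) (haq : a ≤ q) (hq : q ≤ 1) :
    u q ≤ chordToOne m a q := by
  rcases hq.lt_or_eq with hq | rfl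
  · have ha1 : 0 < 1 - a := by linarith
    have hcomb : (1 - a) * u q = (1 - q) * u a + (q - a) * u 1 := by
      rw [apply_eq_of_affine haff q, apply_eq_of_affine haff a]
      ring
    rw [chordToOne, if_pos (by linarith), le_div_iff₀ ha1, mul_comm, hcomb]
    gcongr
  · rwa [chordToOne_one]

theorem tendsto_chordToOne_self {m : ℝ → ℝ} (hm : ContinuousOn m (Icc 0 1)) {q : ℝ}
    (hq : q ∈ Icc (0 : ℝ) 1) :
    Tendsto (fun a => chordToOne m a q) (𝓝[Icc 0 q] q) (𝓝 (m q)) := by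
  rcases hq.2.lt_or_eq with hq1 | rfl
  · have hself : ((1 - q) * m q + (q - q) * m 1) / (1 - q) = m q := by
      field_simp [(sub_pos.2 hq1).ne']
      ring
    have hcont : ContinuousWithinAt
        (fun a => ((1 - q) * m a + (q - a) * m 1) / (1 - a)) (Icc 0 q) q := by
      have hmq : ContinuousWithinAt m (Icc 0 q) q :=
        (hm q hq).mono (Icc_subset_Icc_right hq1.le)
      exact ((continuousWithinAt_const.mul hmq).add
        ((continuousWithinAt_const.sub continuousWithinAt_id).mul continuousWithinAt_const)).div
        (continuousWithinAt_const.sub continuousWithinAt_id) (sub_pos.2 hq1).ne'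
    rw [← hself]
    refine hcont.tendsto.congr' (eventually_nhdsWithin_of_forall fun a ha => ?_)
    exact (if_pos (ha.2.trans_lt hq1)).symm
  · simp only [chordToOne_one]
    exact tendsto_const_nhds

section Qseq

variable {m ustar : ℝ → ℝ} {δ : ℝ}

theorem Qseq_succ_of_nonempty {k : ℕ} (hk : (Qseq m ustar δ k).Nonempty) :
    Qseq m ustar δ (k + 1) = {q ∈ Qseq m ustar δ k |
      m q ≤ (1 - δ) * ustar q + δ * chordToOne m (sInf (Qseq m ustar δ k)) q} := by
  rw [Qseq, if_neg hk.ne_empty]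
  rfl

theorem Qseq_succ_subset (k : ℕ) : Qseq m ustar δ (k + 1) ⊆ Qseq m ustar δ k := by
  rcases (Qseq m ustar δ k).eq_empty_or_nonempty with hk | hk
  · rw [Qseq, if_pos hk]
    exact empty_subset _
  · rw [Qseq_succ_of_nonempty hk]
    exact sep_subset _ _

theorem antitone_Qseq : Antitone (Qseq m ustar δ) :=
  antitone_nat_of_succ_le Qseq_succ_subset

theorem Qseq_subset_Icc (k : ℕ) : Qseq m ustar δ k ⊆ Icc 0 1 :=
  antitone_Qseq (Nat.zero_le k)

theorem isClosed_Qseq (hm : ContinuousOn m (Icc 0 1)) (hu : Continuous ustar) (k : ℕ) :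
    IsClosed (Qseq m ustar δ k) := by
  induction k with
  | zero => exact isClosed_Icc
  | succ k ih =>
    rcases (Qseq m ustar δ k).eq_empty_or_nonempty with hk | hk
    · rw [Qseq, if_pos hk]
      exact isClosed_empty
    · rw [Qseq_succ_of_nonempty hk]
      exact ih.isClosed_le (hm.mono (Qseq_subset_Icc k))
        ((continuous_const.mul hu).add
          (continuous_const.mul (continuous_chordToOne m _))).continuousOn

theorem contact_subset_Qseq
    (haff : ∀ x y t : ℝ, ustar ((1 - t) * x + t * y) = (1 - t) * ustar x + t * ustar y)
    (hδ : 0 ≤ δ) (hle : ∀ p ∈ Icc (0 : ℝ) 1, ustar p ≤ m p) (k : ℕ) :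
    {p ∈ Icc (0 : ℝ) 1 | m p = ustar p} ⊆ Qseq m ustar δ k := by
  induction k with
  | zero => exact fun p hp => hp.1
  | succ k ih =>
    intro p hp
    have hpk := ih hp
    have hne : (Qseq m ustar δ k).Nonempty := ⟨p, hpk⟩
    have ha0 : 0 ≤ sInf (Qseq m ustar δ k) :=
      le_csInf hne fun x hx => (Qseq_subset_Icc k hx).1
    have hap : sInf (Qseq m ustar δ k) ≤ p :=
      csInf_le (bddBelow_Icc.mono (Qseq_subset_Icc k)) hpk
    have hchord : ustar p ≤ chordToOne m (sInf (Qseq m ustar δ k)) p :=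
      affine_le_chordToOne haff (hle _ ⟨ha0, hap.trans hp.1.2⟩)
        (hle 1 (right_mem_Icc.2 zero_le_one)) hap hp.1.2
    rw [Qseq_succ_of_nonempty hne]
    refine ⟨hpk, ?_⟩
    linarith [hp.2, mul_le_mul_of_nonneg_left hchord hδ]

theorem sInf_iInter_Qseq_mem_contact (hm : ContinuousOn m (Icc 0 1))
    (haff : ∀ x y t : ℝ, ustar ((1 - t) * x + t * y) = (1 - t) * ustar x + t * ustar y)
    (hδ : δ < 1) (hle : ∀ p ∈ Icc (0 : ℝ) 1, ustar p ≤ m p)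
    (hne : (⋂ k, Qseq m ustar δ k).Nonempty) :
    sInf (⋂ k, Qseq m ustar δ k) ∈ {p ∈ Icc (0 : ℝ) 1 | m p = ustar p} := by
  have hclosed := isClosed_Qseq (δ := δ) hm (continuous_of_affine haff)
  have hbdd : BddBelow (⋂ k, Qseq m ustar δ k) :=
    bddBelow_Icc.mono ((iInter_subset _ 0).trans (Qseq_subset_Icc 0))
  set q := sInf (⋂ k, Qseq m ustar δ k)
  have hqk : ∀ k, q ∈ Qseq m ustar δ k :=
    mem_iInter.1 ((isClosed_iInter hclosed).csInf_mem hne hbdd)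
  have hq : q ∈ Icc (0 : ℝ) 1 := Qseq_subset_Icc 0 (hqk 0)
  have hinf : Tendsto (fun k => sInf (Qseq m ustar δ k)) atTop (𝓝[Icc 0 q] q) := by
    refine tendsto_nhdsWithin_iff.2 ⟨tendsto_csInf_iInter_of_antitone antitone_Qseq hclosed
      bddBelow_Icc hne, Eventually.of_forall fun k => ⟨?_, ?_⟩⟩
    · exact le_csInf ⟨q, hqk k⟩ fun x hx => (Qseq_subset_Icc k hx).1
    · exact csInf_le (bddBelow_Icc.mono (Qseq_subset_Icc k)) (hqk k)
  have hlim : m q ≤ (1 - δ) * ustar q + δ * m q := by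
    refine ge_of_tendsto ((((tendsto_chordToOne_self hm hq).comp hinf).const_mul δ).const_add _)
      (Eventually.of_forall fun k => ?_)
    have hq_succ := hqk (k + 1)
    rw [Qseq_succ_of_nonempty ⟨q, hqk k⟩] at hq_succ
    exact hq_succ.2
  refine ⟨hq, le_antisymm ?_ (hle q hq)⟩
  nlinarith

end Qseq

theorem Qseq_inter_nonempty_of_P_nonempty_general
    (m ustar : ℝ → ℝ) (δ : ℝ) (hδ : δ ∈ Set.Ioo (0 : ℝ) 1)
    (hcont : ContinuousOn m (Set.Icc (0 : ℝ) 1))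
    (haff : ∀ x y t : ℝ, ustar ((1 - t) * x + t * y) = (1 - t) * ustar x + t * ustar y)
    (hle : ∀ p ∈ Set.Icc (0 : ℝ) 1, ustar p ≤ m p)
    (hP : {p ∈ Set.Icc (0 : ℝ) 1 | m p = ustar p}.Nonempty) :
    (⋂ k : ℕ, Qseq m ustar δ k).Nonempty ∧
    sInf (⋂ k : ℕ, Qseq m ustar δ k) ∈ {p ∈ Set.Icc (0 : ℝ) 1 | m p = ustar p} ∧
    sInf (⋂ k : ℕ, Qseq m ustar δ k)
      = sInf {p ∈ Set.Icc (0 : ℝ) 1 | m p = ustar p} := by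
  have hPQ : {p ∈ Icc (0 : ℝ) 1 | m p = ustar p} ⊆ ⋂ k, Qseq m ustar δ k :=
    subset_iInter (contact_subset_Qseq haff hδ.1.le hle)
  have hne := hP.mono hPQ
  have hmem := sInf_iInter_Qseq_mem_contact hcont haff hδ.2 hle hne
  refine ⟨hne, hmem, le_antisymm ?_ ?_⟩
  · exact csInf_le_csInf (bddBelow_Icc.mono ((iInter_subset _ 0).trans (Qseq_subset_Icc 0)))
      hP hPQ
  · exact csInf_le (bddBelow_Icc.mono (sep_subset _ _)) hmem

/-- if `P ≠ ∅` then `Q^∞ = ⋂ₖ Qᵏ` is nonempty, its infimum belongs to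
`P`, and `inf Q^∞ = inf P`. -/
theorem Qseq_inter_nonempty_of_P_nonempty
    (m ustar : ℝ → ℝ) (δ : ℝ) (hδ : δ ∈ Set.Ioo (0 : ℝ) 1)
    (hconv : ConvexOn ℝ (Set.Icc (0 : ℝ) 1) m)
    (hcont : ContinuousOn m (Set.Icc (0 : ℝ) 1))
    (haff : ∀ x y t : ℝ, ustar ((1 - t) * x + t * y) = (1 - t) * ustar x + t * ustar y)
    (hle : ∀ p ∈ Set.Icc (0 : ℝ) 1, ustar p ≤ m p)
    (hP : {p ∈ Set.Icc (0 : ℝ) 1 | m p = ustar p}.Nonempty) :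
    (⋂ k : ℕ, Qseq m ustar δ k).Nonempty ∧
    sInf (⋂ k : ℕ, Qseq m ustar δ k) ∈ {p ∈ Set.Icc (0 : ℝ) 1 | m p = ustar p} ∧
    sInf (⋂ k : ℕ, Qseq m ustar δ k)
      = sInf {p ∈ Set.Icc (0 : ℝ) 1 | m p = ustar p} :=
  Qseq_inter_nonempty_of_P_nonempty_general m ustar δ hδ hcont haff hle hP
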